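/- Fix α ∈ (0,1) and define g(x) = 2(1 - α - α x²)·(tanh x)/x + 2α for x > 0. Then g is strictly decreasing on (0,∞), g(x) → 2 as x → 0⁺, and g(x) → -∞ as x → ∞. Consequently, g has a unique positive zero. -/

import Mathlib

noncomputable def g (α x : ℝ) : ℝ := 2 * (1 - α - α * x ^ 2) * Real.tanh x / x + 2 * α

/-!
Away from `0`, `g α x = 2 (1 - α) · (tanh x / x) + 2 α (1 - x tanh x)`. The map `x ↦ x tanh x`
is strictly increasing on `[0, ∞)`, and `x ↦ tanh x / x` is strictly decreasing on `(0, ∞)`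
because its derivative has the sign of `x (1 - tanh² x) - tanh x`, which is negative since
`x < sinh x ≤ sinh x cosh x`. Hence `g α` is strictly decreasing for `α ∈ [0, 1]`. As `x → 0`,
`tanh x / x → tanh' 0 = 1`, so `g α x → 2`, while `x tanh x → ∞` drives `g α` to `-∞`. The
intermediate value theorem and strict monotonicity give the unique zero.
-/

open Filter Set Topology

namespace Real

theorem one_sub_tanh_sq (x : ℝ) : 1 - tanh x ^ 2 = (cosh x ^ 2)⁻¹ := by
  have := (cosh_pos x).ne'
  rw [tanh_eq_sinh_div_cosh]
  field_simp
  linarith [cosh_sq_sub_sinh_sq x]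

theorem hasDerivAt_tanh (x : ℝ) : HasDerivAt tanh (1 - tanh x ^ 2) x := by
  have h := (hasDerivAt_sinh x).div (hasDerivAt_cosh x) (cosh_pos x).ne'
  rw [← sq, ← sq, cosh_sq_sub_sinh_sq, one_div, ← one_sub_tanh_sq] at h
  exact h.congr_of_eventuallyEq (.of_forall tanh_eq_sinh_div_cosh)

theorem continuous_tanh : Continuous tanh :=
  continuous_iff_continuousAt.2 fun x => (hasDerivAt_tanh x).continuousAt

theorem tanh_strictMono : StrictMono tanh :=
  strictMono_of_hasDerivAt_pos hasDerivAt_tanh fun x => sub_pos.2 (tanh_sq_lt_one x)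

theorem tanh_pos {x : ℝ} (hx : 0 < x) : 0 < tanh x :=
  tanh_zero ▸ tanh_strictMono hx

theorem strictMonoOn_mul_self_tanh : StrictMonoOn (fun x => x * tanh x) (Ici 0) :=
  fun _ hx _ _ hxy =>
    mul_lt_mul'' hxy (tanh_strictMono hxy) hx (tanh_zero ▸ tanh_strictMono.monotone hx)

theorem mul_one_sub_tanh_sq_lt_tanh {x : ℝ} (hx : 0 < x) : x * (1 - tanh x ^ 2) < tanh x := by
  have hsinh : 0 < sinh x := sinh_pos_iff.2 hx
  have := cosh_pos x
  calc x * (1 - tanh x ^ 2) = x / cosh x ^ 2 := by rw [one_sub_tanh_sq, div_eq_mul_inv]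
    _ < sinh x * cosh x / cosh x ^ 2 := by
        gcongr
        exact (self_lt_sinh_iff.2 hx).trans_le (le_mul_of_one_le_right hsinh.le (one_le_cosh x))
    _ = tanh x := by
        rw [tanh_eq_sinh_div_cosh]
        field_simp

theorem strictAntiOn_tanh_div_self : StrictAntiOn (fun x => tanh x / x) (Ioi 0) := by
  refine strictAntiOn_of_hasDerivWithinAt_neg (convex_Ioi 0)
    (continuous_tanh.continuousOn.div continuousOn_id fun x hx => ne_of_gt hx)
    (f' := fun x => ((1 - tanh x ^ 2) * x - tanh x) / x ^ 2) ?_ ?_ <;>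
    simp only [interior_Ioi, mem_Ioi]
  · intro x hx
    exact ((hasDerivAt_tanh x).div (hasDerivAt_id' x) hx.ne').hasDerivWithinAt.congr_deriv
      (by ring)
  · intro x hx
    have := mul_one_sub_tanh_sq_lt_tanh hx
    exact div_neg_of_neg_of_pos (by linarith) (by positivity)

theorem tendsto_tanh_div_self_nhdsNE_zero : Tendsto (fun x => tanh x / x) (𝓝[≠] 0) (𝓝 1) := by
  simpa [div_eq_inv_mul] using hasDerivAt_iff_tendsto_slope_zero.1 (hasDerivAt_tanh 0)

theorem tendsto_tanh_div_self_atTop : Tendsto (fun x => tanh x / x) atTop (𝓝 0) := by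
  refine tendsto_of_tendsto_of_tendsto_of_le_of_le' tendsto_const_nhds tendsto_inv_atTop_zero ?_ ?_
  all_goals filter_upwards [eventually_gt_atTop 0] with x hx
  · exact div_nonneg (tanh_pos hx).le hx.le
  · rw [← one_div]
    exact div_le_div_of_nonneg_right (tanh_lt_one x).le hx.le

theorem tendsto_mul_self_tanh_atTop : Tendsto (fun x => x * tanh x) atTop atTop := by
  refine tendsto_atTop_mono' _ ?_ (tendsto_id.atTop_mul_const (tanh_pos one_pos))
  filter_upwards [eventually_ge_atTop 1] with x hx
  exact mul_le_mul_of_nonneg_left (tanh_strictMono.monotone hx) (zero_le_one.trans hx)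

end Real

open Real

theorem g_eq_of_ne_zero (α : ℝ) {x : ℝ} (hx : x ≠ 0) :
    g α x = 2 * (1 - α) * (tanh x / x) + 2 * α * (1 - x * tanh x) := by
  unfold g
  field_simp
  ring

theorem continuousAt_g (α : ℝ) {x : ℝ} (hx : x ≠ 0) : ContinuousAt (g α) x := by
  unfold g
  have := continuous_tanh.continuousAt (x := x)
  fun_prop (disch := exact hx)

theorem strictAntiOn_g {α : ℝ} (hα : α ∈ Icc (0 : ℝ) 1) : StrictAntiOn (g α) (Ioi 0) := by
  intro x hx y hy hxy
  rw [g_eq_of_ne_zero α (ne_of_gt hx), g_eq_of_ne_zero α (ne_of_gt hy)]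
  have h₁ := strictAntiOn_tanh_div_self hx hy hxy
  have h₂ := strictMonoOn_mul_self_tanh (Ioi_subset_Ici_self hx) (Ioi_subset_Ici_self hy) hxy
  simp only at h₁ h₂
  rcases hα.2.lt_or_eq with hα₁ | rfl
  · nlinarith [mul_pos (sub_pos.2 hα₁) (sub_pos.2 h₁), mul_nonneg hα.1 (sub_pos.2 h₂).le]
  · linarith

theorem tendsto_g_nhdsNE_zero (α : ℝ) : Tendsto (g α) (𝓝[≠] 0) (𝓝 2) := by
  have hcoeff : Continuous fun x : ℝ => 2 * (1 - α - α * x ^ 2) := by fun_prop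
  have h := ((hcoeff.tendsto 0).mono_left nhdsWithin_le_nhds).mul
    tendsto_tanh_div_self_nhdsNE_zero |>.add_const (2 * α)
  rw [show 2 * (1 - α - α * 0 ^ 2) * 1 + 2 * α = 2 by ring] at h
  exact h.congr fun x => by simp only [g, mul_div_assoc]

theorem tendsto_g_atTop {α : ℝ} (hα : 0 < α) : Tendsto (g α) atTop atBot := by
  have h := ((tendsto_tanh_div_self_atTop.const_mul (2 * (1 - α))).add_const (2 * α)).add_atBot
    (tendsto_neg_atTop_atBot.comp
      (tendsto_mul_self_tanh_atTop.const_mul_atTop (by positivity : 0 < 2 * α)))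
  refine h.congr' ?_
  filter_upwards [eventually_gt_atTop 0] with x hx
  rw [g_eq_of_ne_zero α hx.ne', Function.comp_apply]
  ring

theorem existsUnique_pos_eq_zero_of_strictAntiOn {f : ℝ → ℝ} {v : ℝ} (hv : 0 < v)
    (hf : ContinuousOn f (Ioi 0)) (hanti : StrictAntiOn f (Ioi 0))
    (h₀ : Tendsto f (𝓝[>] 0) (𝓝 v)) (htop : Tendsto f atTop atBot) :
    ∃! x, 0 < x ∧ f x = 0 := by
  obtain ⟨x, hx, hfx⟩ := isPreconnected_Ioi.intermediate_value_Iio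
    (le_principal_iff.2 (Ioi_mem_atTop 0)) (le_principal_iff.2 self_mem_nhdsWithin) hf htop h₀ hv
  exact ⟨x, ⟨hx, hfx⟩, fun y hy => hanti.injOn hy.1 hx (hy.2.trans hfx.symm)⟩

theorem stmt_10 (α : ℝ) (hα : 0 < α ∧ α < 1) :
    StrictAntiOn (g α) (Set.Ioi 0) ∧
    Filter.Tendsto (g α) (nhdsWithin 0 (Set.Ioi 0)) (nhds 2) ∧
    Filter.Tendsto (g α) Filter.atTop Filter.atBot ∧
    (∃! x : ℝ, 0 < x ∧ g α x = 0) := by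
  have hanti := strictAntiOn_g ⟨hα.1.le, hα.2.le⟩
  have h₀ := (tendsto_g_nhdsNE_zero α).mono_left (nhdsGT_le_nhdsNE 0)
  have htop := tendsto_g_atTop hα.1
  exact ⟨hanti, h₀, htop, existsUnique_pos_eq_zero_of_strictAntiOn two_pos
    (fun x hx => (continuousAt_g α (ne_of_gt hx)).continuousWithinAt) hanti h₀ htop⟩
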